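/- Let h : g₁ ∼ g₂ be a homotopy through monotone maps between monotone continuous maps g₁, g₂ : X → Y, where X is a compact Hausdorff preordered topological space and Y is a complete lattice carrying a Lawson-lattice topology. Then the functions j, k : X × [0,1] → Y defined by j(x,t) = ⨅ { h(x,s) | s ∈ [0, 1−t] } and k(x,t) = ⨅ { h(x,s) | s ∈ [t, 1] } are continuous, and are monotone with respect to the product order (the preorder on X and the standard order on [0,1]); moreover j(·,0) = k(·,0), j(·,1) = g₁, and k(·,1) = g₂. -/

import Mathlib

/-!
Continuity of `⊓` makes the order of `Y` closed, so for an inf-closed `W` Cantor's intersection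
theorem puts `sInf W` in `closure W`. If `W` is a neighbourhood of `u`, continuity of `· ⊓ u`
makes `Ici (sInf W)` a neighbourhood of every `k ≥ u`. Hence `p ↦ sInf (K p)` is continuous for
a family of sets `K p` varying upper and lower hemicontinuously: a limit `z` of `sInf (K p)` lies
below every point of `K p₀`, and above `sInf W` for every small inf-closed neighbourhood `W` of
`sInf (K p₀)`, because eventually `K p ⊆ interior (Ici (sInf W))`. The sets
`h (x, [a t, b t])` form such a family when the endpoints `a ≤ b` are continuous.
-/

open Filter Topology Set unitInterval

theorem monotone_sInf_image_Icc {P T Y : Type*} [Preorder P] [Preorder T] [CompleteLattice Y]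
    {f : P → T → Y} (hf : ∀ s, Monotone fun p => f p s) {a b : P → T} (ha : Monotone a)
    (hb : Antitone b) :
    Monotone fun p => sInf (f p '' Icc (a p) (b p)) := by
  intro p q hpq
  refine le_sInf ?_
  rintro _ ⟨s, hs, rfl⟩
  exact (sInf_le (mem_image_of_mem _ (Icc_subset_Icc (ha hpq) (hb hpq) hs))).trans (hf s hpq)

section CompactSemilattice

variable {Y : Type*} [TopologicalSpace Y]

instance ContinuousInf.toOrderClosedTopology [SemilatticeInf Y] [ContinuousInf Y] [T2Space Y] :
    OrderClosedTopology Y where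
  isClosed_le' := by
    simpa only [inf_eq_left] using
      isClosed_eq (continuous_inf : Continuous fun p : Y × Y => p.1 ⊓ p.2) continuous_fst

theorem Ici_mem_nhds_of_mem_lowerBounds [SemilatticeInf Y] [ContinuousInf Y] {W : Set Y}
    {m u k : Y} (hW : W ∈ 𝓝 u) (hm : m ∈ lowerBounds W) (huk : u ≤ k) : Ici m ∈ 𝓝 k := by
  have hmeet : Tendsto (fun v => v ⊓ u) (𝓝 k) (𝓝 (k ⊓ u)) :=
    (continuous_id.inf continuous_const).tendsto k
  rw [inf_eq_right.2 huk] at hmeet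
  filter_upwards [hmeet hW] with v hv using (hm hv).trans inf_le_left

theorem InfClosed.sInf_mem_closure [CompleteLattice Y] [CompactSpace Y] [OrderClosedTopology Y]
    {W : Set Y} (hW : InfClosed W) (hne : W.Nonempty) : sInf W ∈ closure W := by
  have : Nonempty W := hne.to_subtype
  obtain ⟨y, hy⟩ := IsCompact.nonempty_iInter_of_directed_nonempty_isCompact_isClosed
    (fun w : W => closure W ∩ Iic (w : Y))
    (fun v w => ⟨⟨v ⊓ w, hW v.2 w.2⟩, inter_subset_inter_right _ (Iic_subset_Iic.2 inf_le_left),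
      inter_subset_inter_right _ (Iic_subset_Iic.2 inf_le_right)⟩)
    (fun w => ⟨w, subset_closure w.2, le_rfl⟩)
    (fun _ => (isClosed_closure.inter isClosed_Iic).isCompact)
    (fun _ => isClosed_closure.inter isClosed_Iic)
  simp only [mem_iInter, mem_inter_iff, mem_Iic, Subtype.forall] at hy
  obtain ⟨w, hw⟩ := hne
  have hyW : y ∈ closure W := (hy w hw).1
  have hsInf_le : sInf W ≤ y := closure_minimal (fun _ hv => sInf_le hv) isClosed_Ici hyW
  rwa [le_antisymm hsInf_le (le_sInf fun v hv => (hy v hv).2)]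

theorem tendsto_sInf_of_hemicontinuous [CompleteLattice Y] [ContinuousInf Y] [CompactSpace Y]
    [T2Space Y] (hbasis : ∀ y : Y, (𝓝 y).HasBasis (fun s => s ∈ 𝓝 y ∧ InfClosed s) id)
    {P : Type*} [TopologicalSpace P] {K : P → Set Y} {p₀ : P}
    (hupper : ∀ U, IsOpen U → K p₀ ⊆ U → ∀ᶠ p in 𝓝 p₀, K p ⊆ U)
    (hlower : ∀ y ∈ K p₀, ∃ f : P → Y, Tendsto f (𝓝 p₀) (𝓝 y) ∧ ∀ᶠ p in 𝓝 p₀, f p ∈ K p) :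
    Tendsto (fun p => sInf (K p)) (𝓝 p₀) (𝓝 (sInf (K p₀))) := by
  rw [tendsto_iff_ultrafilter]
  intro 𝒰 h𝒰
  set z := (𝒰.map fun p => sInf (K p)).lim
  have hz : Tendsto (fun p => sInf (K p)) 𝒰 (𝓝 z) := (𝒰.map _).le_nhds_lim
  suffices z = sInf (K p₀) by rwa [← this]
  refine le_antisymm (le_sInf fun y hy => ?_) ?_
  · obtain ⟨f, hf, hfK⟩ := hlower y hy
    exact le_of_tendsto_of_tendsto hz (hf.mono_left h𝒰)
      ((hfK.filter_mono h𝒰).mono fun p hp => sInf_le hp)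
  · rw [← mem_Iic, ← isClosed_Iic.closure_eq, mem_closure_iff_nhds]
    intro U hU
    obtain ⟨U', hU', hU'c, hU'U⟩ := exists_mem_nhds_isClosed_subset hU
    obtain ⟨W, ⟨hW, hWinf⟩, hWU'⟩ := (hbasis _).mem_iff.1 hU'
    have hKint : K p₀ ⊆ interior (Ici (sInf W)) := fun k hk =>
      mem_interior_iff_mem_nhds.2
        (Ici_mem_nhds_of_mem_lowerBounds hW (fun _ => sInf_le) (sInf_le hk))
    refine ⟨sInf W, hU'U (hU'c.closure_subset_iff.2 hWU' (hWinf.sInf_mem_closure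
      (nonempty_of_mem hW))), ge_of_tendsto hz ?_⟩
    exact ((hupper _ isOpen_interior hKint).filter_mono h𝒰).mono fun p hp =>
      le_sInf fun k hk => interior_subset (hp hk)

theorem continuous_sInf_image_Icc [CompleteLattice Y] [ContinuousInf Y] [CompactSpace Y]
    [T2Space Y] (hbasis : ∀ y : Y, (𝓝 y).HasBasis (fun s => s ∈ 𝓝 y ∧ InfClosed s) id)
    {P T : Type*} [TopologicalSpace P] [TopologicalSpace T] [LinearOrder T]
    [OrderClosedTopology T] [CompactSpace T] {f : P → T → Y}
    (hf : Continuous (Function.uncurry f))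
    {a b : P → T} (ha : Continuous a) (hb : Continuous b) (hab : a ≤ b) :
    Continuous fun p => sInf (f p '' Icc (a p) (b p)) := by
  refine continuous_iff_continuousAt.2 fun p₀ => tendsto_sInf_of_hemicontinuous hbasis ?_ ?_
  · intro U hU hsub
    set E : Set (P × T) := {q | q.2 ∈ Icc (a q.1) (b q.1) ∧ f q.1 q.2 ∈ Uᶜ}
    have hE : IsClosed E :=
      ((isClosed_le (ha.comp continuous_fst) continuous_snd).inter
        (isClosed_le continuous_snd (hb.comp continuous_fst))).inter
        (hU.isClosed_compl.preimage hf)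
    have hp₀ : p₀ ∉ Prod.fst '' E := by
      rintro ⟨⟨p, s⟩, ⟨hs, hsU⟩, rfl⟩
      exact hsU (hsub ⟨s, hs, rfl⟩)
    filter_upwards [(isClosedMap_fst_of_compactSpace _ hE).isOpen_compl.mem_nhds hp₀] with p hp
    rintro _ ⟨s, hs, rfl⟩
    by_contra hsU
    exact hp ⟨(p, s), ⟨hs, hsU⟩, rfl⟩
  · rintro _ ⟨s, hs, rfl⟩
    refine ⟨fun p => f p (max (a p) (min s (b p))), ?_, Eventually.of_forall fun p =>
      ⟨_, ⟨le_max_left _ _, max_le (hab p) (min_le_right _ _)⟩, rfl⟩⟩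
    have hclamp : max (a p₀) (min s (b p₀)) = s := by rw [min_eq_left hs.2, max_eq_right hs.1]
    have hcont : Continuous fun p => f p (max (a p) (min s (b p))) :=
      hf.comp (continuous_id.prodMk (ha.max (continuous_const.min hb)))
    simpa only [hclamp] using hcont.tendsto p₀

end CompactSemilattice

theorem stmt_10_general {X Y : Type*} [TopologicalSpace X] [Preorder X]
    [CompleteLattice Y] [TopologicalSpace Y] [CompactSpace Y] [T2Space Y]
    (hinf : Continuous fun p : Y × Y => p.1 ⊓ p.2)
    (hbasis : ∀ y : Y, (nhds y).HasBasis
      (fun s : Set Y => s ∈ nhds y ∧ ∀ a ∈ s, ∀ b ∈ s, a ⊓ b ∈ s) id)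
    (g₁ g₂ : X → Y)
    (h : X × I → Y) (hh : Continuous h)
    (hh0 : ∀ x, h (x, 0) = g₁ x) (hh1 : ∀ x, h (x, 1) = g₂ x)
    (hhm : ∀ t : I, Monotone fun x : X => h (x, t))
    (j k : X × I → Y)
    (hj : ∀ x t, j (x, t) =
      sInf ((fun s : I => h (x, s)) '' {s : I | (s : ℝ) ∈ Set.Icc 0 (1 - (t : ℝ))}))
    (hk : ∀ x t, k (x, t) =
      sInf ((fun s : I => h (x, s)) '' {s : I | (s : ℝ) ∈ Set.Icc (t : ℝ) 1})) :
    Continuous j ∧ Continuous k ∧ Monotone j ∧ Monotone k ∧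
      (∀ x, j (x, 0) = k (x, 0)) ∧ (∀ x, j (x, 1) = g₁ x) ∧ (∀ x, k (x, 1) = g₂ x) := by
  have : ContinuousInf Y := ⟨hinf⟩
  -- the index sets of `hj` and `hk` are these intervals up to definitional unfolding
  obtain rfl : j = fun p => sInf ((fun s => h (p.1, s)) '' Icc 0 (σ p.2)) := by
    funext ⟨x, t⟩
    exact hj x t
  obtain rfl : k = fun p => sInf ((fun s => h (p.1, s)) '' Icc p.2 1) := by
    funext ⟨x, t⟩
    exact hk x t
  have hhc : Continuous (Function.uncurry fun (p : X × I) (s : I) => h (p.1, s)) := by fun_prop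
  have hhm' : ∀ s : I, Monotone fun p : X × I => h (p.1, s) := fun s => (hhm s).comp monotone_fst
  refine ⟨continuous_sInf_image_Icc hbasis hhc continuous_const
      (continuous_symm.comp continuous_snd) fun _ => nonneg',
    continuous_sInf_image_Icc hbasis hhc continuous_snd continuous_const fun _ => le_one',
    monotone_sInf_image_Icc hhm' monotone_const fun p q hpq => symm_le_symm.2 hpq.2,
    monotone_sInf_image_Icc hhm' monotone_snd antitone_const,
    fun x => by simp, fun x => by simp [hh0], fun x => by simp [hh1]⟩

/-- Given a homotopy `h` through monotone maps from `g₁` to `g₂`, where `X` is a compact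
Hausdorff preordered space and `Y` is a complete lattice carrying a Lawson-lattice
topology, the maps `j (x, t) = ⨅ h (x, [0, 1 - t])` and `k (x, t) = ⨅ h (x, [t, 1])`
are continuous and monotone (for the product order), with `j (·, 0) = k (·, 0)`,
`j (·, 1) = g₁` and `k (·, 1) = g₂`. -/
theorem stmt_10 {X Y : Type*} [TopologicalSpace X] [Preorder X]
    [CompactSpace X] [T2Space X]
    [CompleteLattice Y] [TopologicalSpace Y] [CompactSpace Y] [T2Space Y]
    (hinf : Continuous fun p : Y × Y => p.1 ⊓ p.2)
    (hbasis : ∀ y : Y, (nhds y).HasBasis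
      (fun s : Set Y => s ∈ nhds y ∧ ∀ a ∈ s, ∀ b ∈ s, a ⊓ b ∈ s) id)
    (g₁ g₂ : X → Y) (hg₁ : Continuous g₁) (hg₁m : Monotone g₁)
    (hg₂ : Continuous g₂) (hg₂m : Monotone g₂)
    (h : X × I → Y) (hh : Continuous h)
    (hh0 : ∀ x, h (x, 0) = g₁ x) (hh1 : ∀ x, h (x, 1) = g₂ x)
    (hhm : ∀ t : I, Monotone fun x : X => h (x, t))
    (j k : X × I → Y)
    (hj : ∀ x t, j (x, t) =
      sInf ((fun s : I => h (x, s)) '' {s : I | (s : ℝ) ∈ Set.Icc 0 (1 - (t : ℝ))}))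
    (hk : ∀ x t, k (x, t) =
      sInf ((fun s : I => h (x, s)) '' {s : I | (s : ℝ) ∈ Set.Icc (t : ℝ) 1})) :
    Continuous j ∧ Continuous k ∧ Monotone j ∧ Monotone k ∧
      (∀ x, j (x, 0) = k (x, 0)) ∧ (∀ x, j (x, 1) = g₁ x) ∧ (∀ x, k (x, 1) = g₂ x) :=
  stmt_10_general hinf hbasis g₁ g₂ h hh hh0 hh1 hhm j k hj hk
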